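/- (Lebesgue dominated convergence theorem for modulars.) Let X be a Dedekind complete Riesz space with strong unit e, let (G, Σ, μ) be as in the context, let ρ be a monotone finite modular on the space of all functions G → X, and let F be a free filter on ℕ. Let (f_z)_{z∈ℕ}, f_z : G → X, μ-converge to 0 (relative to F). Suppose there are a function g : G → X that is absolutely continuous with respect to ρ and a set F₀ ∈ F such that |f_z(t)| ≤ g(t) for all z ∈ F₀ and all t ∈ G. Then there exists a real α > 0 such that (ρ(α·f_z))_{z∈ℕ} (o_F)-converges to 0, i.e. there is an (o)-sequence (σ_p) in X with {z ∈ ℕ : ρ(α·f_z) ≤ σ_p} ∈ F for every p. -/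

import Mathlib

open scoped ENNReal

/-- An `(o)`-sequence in a lattice-ordered group: a decreasing sequence of nonnegative
elements whose infimum is `0`. -/
def IsOSeq {α : Type*} [Lattice α] [AddCommGroup α] (σ : ℕ → α) : Prop :=
  Antitone σ ∧ (∀ p, 0 ≤ σ p) ∧ IsGLB (Set.range σ) 0

/-- The sequence `f z : G → X` `μ`-converges to `g : G → X` relative to the filter `F`. -/
def MuConv {X G : Type*} [Lattice X] [AddCommGroup X] [Module ℝ X] [MeasurableSpace G]
    (μ : Set G → ℝ≥0∞) (F : Filter ℕ) (e : X) (f : ℕ → G → X) (g : G → X) : Prop :=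
  ∃ ε : ℕ → ℝ, IsOSeq ε ∧ ∃ σ : ℕ → ℝ, IsOSeq σ ∧
    ∃ A : ℕ → ℕ → Set G, (∀ z p, MeasurableSet (A z p)) ∧
      (∀ z p, {t : G | ¬ |f z t - g t| ≤ ε p • e} ⊆ A z p) ∧
      (∀ p, {z : ℕ | μ (A z p) ≤ ENNReal.ofReal (σ p)} ∈ F)

/-- The single function `g : G → X` is absolutely continuous with respect to the modular `ρ`. -/
def AbsCont {X G : Type*} [Lattice X] [AddCommGroup X] [Module ℝ X] [MeasurableSpace G]
    (μ : Set G → ℝ≥0∞) (ρ : (G → X) → WithTop X) (g : G → X) : Prop :=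
  ∃ α : ℝ, 0 < α ∧
    (∀ σ : ℕ → ℝ, IsOSeq σ → ∃ w : ℕ → X, IsOSeq w ∧
      ∀ p : ℕ, ∀ B : Set G, MeasurableSet B → μ B ≤ ENNReal.ofReal (σ p) →
        ρ (Set.indicator B fun t => α • g t) ≤ ((w p : X) : WithTop X)) ∧
    (∃ zs : ℕ → X, IsOSeq zs ∧ ∃ B : ℕ → Set G, (∀ m, MeasurableSet (B m) ∧ μ (B m) < ⊤) ∧
      ∀ m : ℕ, ρ (Set.indicator (B m)ᶜ fun t => α • g t) ≤ ((zs m : X) : WithTop X))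

/-!
Take `α` from the absolute continuity of `g` and split `(α / 3) • f z` into its parts on the
exceptional set `A` of the `μ`-convergence, on `B_m \ A` and on `(A ∪ B_m)ᶜ`. By convexity and
monotonicity of `ρ`, `ρ ((α / 3) • f z) ≤ w_p + λ_{m,p} • u_m + z_m` for every `m`: absolute
continuity bounds the part on the small set `A` and the part outside `B_m`, finiteness of `ρ` the
part on `B_m \ A`, where `|f z| ≤ ε_p • e`. Hence `σ_p = inf_{m ≤ p} (w_p + λ_{m,p} • u_m + z_m)`
bounds it, and `σ` is an `(o)`-sequence because `z` and every `w + λ_m • u_m` are; for the latter,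
Dedekind completeness makes `X` Archimedean.
-/

section DiagInf

variable {X : Type*} [SemilatticeInf X]

def diagInf (c : ℕ → ℕ → X) (p : ℕ) : X :=
  (Finset.range (p + 1)).inf' Finset.nonempty_range_add_one fun m => c m p

theorem diagInf_le (c : ℕ → ℕ → X) {m p : ℕ} (hmp : m ≤ p) : diagInf c p ≤ c m p :=
  Finset.inf'_le _ (Finset.mem_range_succ_iff.mpr hmp)

theorem le_coe_diagInf {c : ℕ → ℕ → X} {p : ℕ} {a : WithTop X}
    (h : ∀ m ≤ p, a ≤ c m p) : a ≤ diagInf c p := by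
  rw [diagInf, Finset.coe_inf']
  exact Finset.le_inf fun m hm => h m (Finset.mem_range_succ_iff.mp hm)

end DiagInf

section OSeq

variable {X : Type*} [Lattice X] [AddCommGroup X] [IsOrderedAddMonoid X]

theorem IsOSeq.le_of_forall_le_add {v : ℕ → X} (hv : IsOSeq v) {b z : X}
    (h : ∀ p, b ≤ v p + z) : b ≤ z :=
  sub_nonpos.mp <| hv.2.2.2 <| by
    rintro _ ⟨p, rfl⟩
    exact sub_le_iff_le_add.mpr (h p)

theorem IsOSeq.add {w v : ℕ → X} (hw : IsOSeq w) (hv : IsOSeq v) :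
    IsOSeq fun p => w p + v p := by
  refine ⟨fun p q hpq => add_le_add (hw.1 hpq) (hv.1 hpq),
    fun p => add_nonneg (hw.2.1 p) (hv.2.1 p), ?_, fun b hb => hv.2.2.2 ?_⟩
  · rintro _ ⟨p, rfl⟩
    exact add_nonneg (hw.2.1 p) (hv.2.1 p)
  · rintro _ ⟨q, rfl⟩
    refine hw.le_of_forall_le_add fun p => ?_
    calc b ≤ w (max p q) + v (max p q) := hb ⟨max p q, rfl⟩
      _ ≤ w p + v q := add_le_add (hw.1 (le_max_left p q)) (hv.1 (le_max_right p q))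

theorem isOSeq_diagInf_add {v : ℕ → ℕ → X} {d : ℕ → X} (hv : ∀ m, IsOSeq (v m))
    (hd : IsOSeq d) : IsOSeq (diagInf fun m p => v m p + d m) := by
  have hnonneg : ∀ p, 0 ≤ diagInf (fun m p => v m p + d m) p := fun p =>
    Finset.le_inf' _ _ fun m _ => add_nonneg ((hv m).2.1 p) (hd.2.1 m)
  refine ⟨fun p q hpq => Finset.le_inf' _ _ fun m hm => ?_, hnonneg, ?_, fun b hb => ?_⟩
  · have hmp := Finset.mem_range_succ_iff.mp hm
    exact (diagInf_le _ (hmp.trans hpq)).trans (add_le_add ((hv m).1 hpq) le_rfl)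
  · rintro _ ⟨p, rfl⟩
    exact hnonneg p
  · refine hd.2.2.2 ?_
    rintro _ ⟨m, rfl⟩
    refine (hv m).le_of_forall_le_add fun p => ?_
    calc b ≤ diagInf (fun m p => v m p + d m) (max m p) := hb ⟨max m p, rfl⟩
      _ ≤ v m (max m p) + d m := diagInf_le _ (le_max_left m p)
      _ ≤ v m p + d m := add_le_add ((hv m).1 (le_max_right m p)) le_rfl

end OSeq

theorem IsOSeq.exists_le {σ : ℕ → ℝ} (hσ : IsOSeq σ) {δ : ℝ} (hδ : 0 < δ) : ∃ p, σ p ≤ δ := by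
  by_contra! h
  have : δ ≤ 0 := hσ.2.2.2 (by rintro _ ⟨p, rfl⟩; exact (h p).le)
  linarith

theorem IsOSeq.const_mul {σ : ℕ → ℝ} (hσ : IsOSeq σ) {c : ℝ} (hc : 0 ≤ c) :
    IsOSeq fun p => c * σ p := by
  refine ⟨fun p q hpq => mul_le_mul_of_nonneg_left (hσ.1 hpq) hc,
    fun p => mul_nonneg hc (hσ.2.1 p), ?_⟩
  have := hσ.2.2.mul_left hc
  rwa [← Set.range_comp, mul_zero] at this

section Archimedean

variable {X : Type*} [Lattice X] [AddCommGroup X] [Module ℝ X]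

theorem abs_smul_le_smul_of_abs_le [PosSMulMono ℝ X] {c : ℝ} (hc : 0 ≤ c) {x y : X} (h : |x| ≤ y) :
    |c • x| ≤ c • y := by
  refine abs_le'.mpr ⟨smul_le_smul_of_nonneg_left ((le_abs_self x).trans h) hc, ?_⟩
  rw [← smul_neg]
  exact smul_le_smul_of_nonneg_left ((neg_le_abs x).trans h) hc

theorem le_zero_of_forall_natCast_smul_le [IsOrderedAddMonoid X]
    (hDC : ∀ S : Set X, S.Nonempty → BddAbove S → ∃ x, IsLUB S x)
    {b u : X} (h : ∀ n : ℕ, (n : ℝ) • b ≤ u) : b ≤ 0 := by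
  obtain ⟨s, hs⟩ := hDC (Set.range fun n : ℕ => (n : ℝ) • b) (Set.range_nonempty _)
    ⟨u, by rintro _ ⟨n, rfl⟩; exact h n⟩
  have hsb : s - b ∈ upperBounds (Set.range fun n : ℕ => (n : ℝ) • b) := by
    rintro _ ⟨n, rfl⟩
    have : ((n + 1 : ℕ) : ℝ) • b ≤ s := hs.1 ⟨n + 1, rfl⟩
    rw [Nat.cast_succ, add_smul, one_smul] at this
    exact le_sub_iff_add_le.mpr this
  exact (le_sub_self_iff s).mp (hs.2 hsb)

theorem IsOSeq.smul [IsOrderedAddMonoid X] [PosSMulMono ℝ X]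
    (hDC : ∀ S : Set X, S.Nonempty → BddAbove S → ∃ x, IsLUB S x)
    {lam : ℕ → ℝ} (hlam : IsOSeq lam) {u : X} (hu : 0 ≤ u) : IsOSeq fun p => lam p • u := by
  refine ⟨fun p q hpq => smul_le_smul_of_nonneg_right (hlam.1 hpq) hu,
    fun p => smul_nonneg (hlam.2.1 p) hu, ?_, fun b hb => ?_⟩
  · rintro _ ⟨p, rfl⟩
    exact smul_nonneg (hlam.2.1 p) hu
  refine le_zero_of_forall_natCast_smul_le hDC (u := u) fun n => ?_
  obtain ⟨p, hp⟩ := hlam.exists_le (δ := ((n : ℝ) + 1)⁻¹) (by positivity)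
  have hnp : (n : ℝ) * lam p ≤ 1 := by
    have := mul_le_mul_of_nonneg_left hp (by positivity : (0 : ℝ) ≤ n + 1)
    rw [mul_inv_cancel₀ (by positivity)] at this
    nlinarith [hlam.2.1 p]
  calc (n : ℝ) • b ≤ (n : ℝ) • lam p • u := smul_le_smul_of_nonneg_left (hb ⟨p, rfl⟩) n.cast_nonneg
    _ = ((n : ℝ) * lam p) • u := smul_smul _ _ _
    _ ≤ (1 : ℝ) • u := smul_le_smul_of_nonneg_right hnp hu
    _ = u := one_smul _ _

end Archimedean

section Modular

theorem modular_third_smul_add_add_le {M R : Type*} [AddCommGroup M] [Module ℝ M]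
    [AddCommMonoid R] [PartialOrder R] [IsOrderedAddMonoid R] {ρ : M → R}
    (hρconv : ∀ f h : M, ∀ α₁ α₂ : ℝ, 0 ≤ α₁ → 0 ≤ α₂ → α₁ + α₂ = 1 →
      ρ (α₁ • f + α₂ • h) ≤ ρ f + ρ h)
    (a b c : M) : ρ ((1 / 3 : ℝ) • (a + b + c)) ≤ ρ a + ρ b + ρ c := by
  have hsplit : (1 / 3 : ℝ) • (a + b + c)
      = (1 / 3 : ℝ) • a + (2 / 3 : ℝ) • ((1 / 2 : ℝ) • b + (1 / 2 : ℝ) • c) := by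
    module
  rw [hsplit, add_assoc]
  calc _ ≤ ρ a + ρ ((1 / 2 : ℝ) • b + (1 / 2 : ℝ) • c) :=
        hρconv _ _ _ _ (by norm_num) (by norm_num) (by norm_num)
    _ ≤ ρ a + (ρ b + ρ c) :=
        add_le_add le_rfl (hρconv _ _ _ _ (by norm_num) (by norm_num) (by norm_num))

theorem indicator_add_indicator_diff_add_indicator_compl_union {G M : Type*} [AddZeroClass M]
    (A B : Set G) (h : G → M) :
    A.indicator h + (B \ A).indicator h + (A ∪ B)ᶜ.indicator h = h := by
  funext t
  by_cases hA : t ∈ A <;> by_cases hB : t ∈ B <;> simp [hA, hB]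

variable {G X : Type*} [Lattice X] [AddCommGroup X] [IsOrderedAddMonoid X]
  {ρ : (G → X) → WithTop X}

theorem modular_indicator_le_indicator
    (hρmono : ∀ f h : G → X, (∀ t, |f t| ≤ |h t|) → ρ f ≤ ρ h)
    {S T : Set G} (hST : S ⊆ T) {f h : G → X} (hfh : ∀ t ∈ S, |f t| ≤ |h t|) :
    ρ (S.indicator f) ≤ ρ (T.indicator h) := by
  refine hρmono _ _ fun t => ?_
  by_cases ht : t ∈ S
  · simpa [ht, hST ht] using hfh t ht
  · simp [ht]

variable [Module ℝ X] [PosSMulMono ℝ X]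

theorem modular_smul_le_of_dominated
    (hρconv : ∀ f h : G → X, ∀ α₁ α₂ : ℝ, 0 ≤ α₁ → 0 ≤ α₂ → α₁ + α₂ = 1 →
      ρ (α₁ • f + α₂ • h) ≤ ρ f + ρ h)
    (hρmono : ∀ f h : G → X, (∀ t, |f t| ≤ |h t|) → ρ f ≤ ρ h)
    {f g : G → X} (hdom : ∀ t, |f t| ≤ g t) {α : ℝ} (hα : 0 ≤ α) {ε : ℝ} {e : X} {A : Set G}
    (hA : {t | ¬ |f t| ≤ ε • e} ⊆ A) (B : Set G) :
    ρ ((α / 3) • f) ≤ ρ (A.indicator fun t => α • g t) + ρ (B.indicator fun _ => (α * ε) • e)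
      + ρ (Bᶜ.indicator fun t => α • g t) := by
  have hsplit : (α / 3) • f = (1 / 3 : ℝ) • (A.indicator (α • f) + (B \ A).indicator (α • f)
      + (A ∪ B)ᶜ.indicator (α • f)) := by
    rw [indicator_add_indicator_diff_add_indicator_compl_union, smul_smul]
    ring_nf
  have hgα : ∀ t, |α • f t| ≤ |α • g t| := fun t =>
    (abs_smul_le_smul_of_abs_le hα (hdom t)).trans (le_abs_self _)
  rw [hsplit]
  refine (modular_third_smul_add_add_le hρconv _ _ _).trans (add_le_add (add_le_add ?_ ?_) ?_)
  · exact modular_indicator_le_indicator hρmono subset_rfl fun t _ => hgα t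
  · refine modular_indicator_le_indicator hρmono Set.sdiff_subset fun t ht => ?_
    have hfε : |f t| ≤ ε • e := not_not.mp fun h => ht.2 (hA h)
    rw [← smul_smul]
    exact (abs_smul_le_smul_of_abs_le hα hfε).trans (le_abs_self _)
  · exact modular_indicator_le_indicator hρmono (Set.compl_subset_compl.mpr Set.subset_union_right)
      fun t _ => hgα t

end Modular

theorem lebesgue_dominated_modular_general
    {X G : Type*} [Lattice X] [AddCommGroup X]
    [CovariantClass X X (· + ·) (· ≤ ·)] [Module ℝ X] [PosSMulMono ℝ X]
    [MeasurableSpace G]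
    -- Dedekind completeness of X
    (hDC : ∀ S : Set X, S.Nonempty → BddAbove S → ∃ x, IsLUB S x)
    -- strong unit e
    (e : X)
    -- finitely additive measure μ : Σ → [0,∞]
    (μ : Set G → ℝ≥0∞)
    -- a modular ρ on the space of all functions G → X
    (ρ : (G → X) → WithTop X)
    (hρconv : ∀ f h : G → X, ∀ α₁ α₂ : ℝ, 0 ≤ α₁ → 0 ≤ α₂ → α₁ + α₂ = 1 →
      ρ (α₁ • f + α₂ • h) ≤ ρ f + ρ h)
    -- ρ is monotone
    (hρmono : ∀ f h : G → X, (∀ t, |f t| ≤ |h t|) → ρ f ≤ ρ h)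
    -- ρ is finite
    (hfin : ∀ A : Set G, MeasurableSet A → μ A < ⊤ → ∀ ε : ℕ → ℝ, IsOSeq ε →
      ∃ u : X, 0 ≤ u ∧ ∃ lam : ℕ → ℝ, IsOSeq lam ∧
        ∀ p : ℕ, ρ (Set.indicator A fun _ => ε p • e) ≤ ((lam p • u : X) : WithTop X))
    -- F is a free filter on ℕ
    (F : Filter ℕ)
    -- the sequence (f z) μ-converges to 0
    (f : ℕ → G → X)
    (hconv : MuConv μ F e f 0)
    -- the dominating function g
    (g : G → X) (hg : AbsCont μ ρ g)
    (F₀ : Set ℕ) (hF₀ : F₀ ∈ F) (hdom : ∀ z ∈ F₀, ∀ t : G, |f z t| ≤ g t) :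
    ∃ α : ℝ, 0 < α ∧ ∃ σ : ℕ → X, IsOSeq σ ∧
      ∀ p : ℕ, {z : ℕ | ρ (α • f z) ≤ ((σ p : X) : WithTop X)} ∈ F := by
  have : IsOrderedAddMonoid X := { add_le_add_left := fun _ _ h _ => by gcongr }
  obtain ⟨ε, hε, σ, hσ, A, hAmeas, hAε, hAσ⟩ := hconv
  obtain ⟨α, hα, hsmall, d, hd, B, hB, hBc⟩ := hg
  obtain ⟨w, hw, hwA⟩ := hsmall σ hσ
  choose u hu lam hlam hlamB using fun m => hfin (B m) (hB m).1 (hB m).2 _ (hε.const_mul hα.le)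
  refine ⟨α / 3, by positivity, diagInf fun m p => w p + lam m p • u m + d m,
    isOSeq_diagInf_add (fun m => hw.add ((hlam m).smul hDC (hu m))) hd, fun p => ?_⟩
  filter_upwards [hF₀, hAσ p] with z hzF₀ hzA
  refine le_coe_diagInf fun m _ => ?_
  have hfA : {t | ¬ |f z t| ≤ ε p • e} ⊆ A z p := by simpa using hAε z p
  calc ρ ((α / 3) • f z)
      ≤ ρ ((A z p).indicator fun t => α • g t) + ρ ((B m).indicator fun _ => (α * ε p) • e)
        + ρ ((B m)ᶜ.indicator fun t => α • g t) :=
        modular_smul_le_of_dominated hρconv hρmono (hdom z hzF₀) hα.le hfA (B m)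
    _ ≤ w p + (lam m p • u m : X) + d m :=
        add_le_add (add_le_add (hwA p _ (hAmeas z p) hzA) (hlamB m p)) (hBc m)
    _ = _ := by push_cast; rfl

/-- **Lebesgue dominated convergence theorem for modulars.** -/
theorem lebesgue_dominated_modular
    {X G : Type*} [Lattice X] [AddCommGroup X]
    [CovariantClass X X (· + ·) (· ≤ ·)] [Module ℝ X] [PosSMulMono ℝ X]
    [MeasurableSpace G]
    -- Dedekind completeness of X
    (hDC : ∀ S : Set X, S.Nonempty → BddAbove S → ∃ x, IsLUB S x)
    -- strong unit e
    (e : X) (he : 0 < e) (hstrong : ∀ x : X, ∃ c : ℝ, 0 < c ∧ |x| ≤ c • e)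
    -- finitely additive measure μ : Σ → [0,∞]
    (μ : Set G → ℝ≥0∞) (hμ0 : μ ∅ = 0)
    (hμadd : ∀ A B : Set G, MeasurableSet A → MeasurableSet B → Disjoint A B →
      μ (A ∪ B) = μ A + μ B)
    -- a modular ρ on the space of all functions G → X
    (ρ : (G → X) → WithTop X)
    (hρ0 : ρ 0 = 0)
    (hρpos : ∀ f : G → X, 0 ≤ ρ f)
    (hρneg : ∀ f : G → X, ρ (-f) = ρ f)
    (hρconv : ∀ f h : G → X, ∀ α₁ α₂ : ℝ, 0 ≤ α₁ → 0 ≤ α₂ → α₁ + α₂ = 1 →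
      ρ (α₁ • f + α₂ • h) ≤ ρ f + ρ h)
    -- ρ is monotone
    (hρmono : ∀ f h : G → X, (∀ t, |f t| ≤ |h t|) → ρ f ≤ ρ h)
    -- ρ is finite
    (hfin : ∀ A : Set G, MeasurableSet A → μ A < ⊤ → ∀ ε : ℕ → ℝ, IsOSeq ε →
      ∃ u : X, 0 ≤ u ∧ ∃ lam : ℕ → ℝ, IsOSeq lam ∧
        ∀ p : ℕ, ρ (Set.indicator A fun _ => ε p • e) ≤ ((lam p • u : X) : WithTop X))
    -- F is a free filter on ℕ
    (F : Filter ℕ) (hFproper : F.NeBot) (hFfree : F ≤ Filter.cofinite)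
    -- the sequence (f z) μ-converges to 0
    (f : ℕ → G → X)
    (hconv : MuConv μ F e f 0)
    -- the dominating function g
    (g : G → X) (hg : AbsCont μ ρ g)
    (F₀ : Set ℕ) (hF₀ : F₀ ∈ F) (hdom : ∀ z ∈ F₀, ∀ t : G, |f z t| ≤ g t) :
    ∃ α : ℝ, 0 < α ∧ ∃ σ : ℕ → X, IsOSeq σ ∧
      ∀ p : ℕ, {z : ℕ | ρ (α • f z) ≤ ((σ p : X) : WithTop X)} ∈ F :=
  lebesgue_dominated_modular_general hDC e μ ρ hρconv hρmono hfin F f hconv g hg F₀ hF₀ hdom
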